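/- arXiv:1502.04610 — 6 statements merged into one kernel-verified Lean document; each statement's English description precedes it below -/
import Mathlib

section
/- For every integer a ≥ 2, one has 1/a = 1 + cf([c_1,...,c_{a-1}]), where c_j = (−1)^j · 2 for 1 ≤ j ≤ a−1 (i.e. the alternating sequence −2, 2, −2, ..., ±2 of length a−1). -/
/-! Negating every partial quotient negates the value, so the tail `2, -2, 2, …` of the sequence
`-2, 2, -2, …` contributes minus the value of the shorter sequence; induction then gives
`cf [-2, 2, …] = -n/(n+1)` for length `n`, and `1 - (a-1)/a = 1/a`. -/

/-- Continued fraction value of a list of rationals: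
`cf [n₁,...,n_k] = 1/(n₁ + 1/(n₂ + ... + 1/n_k))`. -/
def cf : List ℚ → ℚ
  | [] => 0
  | n :: L => 1 / (n + cf L)

theorem cf_map_neg (L : List ℚ) : cf (L.map Neg.neg) = -cf L := by
  induction L with
  | nil => simp [cf]
  | cons n L ih => rw [List.map_cons, cf, cf, ih, ← neg_add, div_neg]

def altTwos (n : ℕ) : List ℚ :=
  (List.range n).map fun j => (-1 : ℚ) ^ (j + 1) * 2

theorem altTwos_succ (n : ℕ) : altTwos (n + 1) = -2 :: (altTwos n).map Neg.neg := by
  simp only [altTwos, List.range_succ_eq_map, List.map_cons, List.map_map]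
  congr 1
  · norm_num
  · refine List.map_congr_left fun j _ => ?_
    simp [pow_succ]

theorem cf_altTwos (n : ℕ) : cf (altTwos n) = -(n : ℚ) / (n + 1) := by
  induction n with
  | zero => simp [altTwos, cf]
  | succ n ih =>
    rw [altTwos_succ, cf, cf_map_neg, ih]
    have hn : (n : ℚ) + 1 ≠ 0 := by positivity
    have hsum : -2 + -(-(n : ℚ) / (n + 1)) = -(n + 2) / (n + 1) := by
      field_simp
      ring
    rw [hsum, one_div_div, div_neg, ← neg_div]
    push_cast
    ring

/-- For every integer `a ≥ 2`,
`1/a = 1 + cf [c₁, ..., c_(a-1)]` where `c_j = (-1)^j * 2`. -/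
theorem one_div_eq_one_add_cf_altSeq (a : ℤ) (ha : 2 ≤ a) :
    (1 : ℚ) / (a : ℚ) =
      1 + cf ((List.range (a - 1).toNat).map (fun j => (-1 : ℚ) ^ (j + 1) * 2)) := by
  have hlen : (((a - 1).toNat : ℕ) : ℚ) = a - 1 := by
    rw [← Int.cast_natCast, Int.toNat_of_nonneg (by omega), Int.cast_sub, Int.cast_one]
  have ha0 : (a : ℚ) ≠ 0 := by
    have : (2 : ℚ) ≤ a := by exact_mod_cast ha
    positivity
  rw [← altTwos, cf_altTwos, hlen, sub_add_cancel]
  field_simp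
  ring
end

section
/- Let M = (m_1,...,m_k) be a tuple of positive integers with m_k ≥ 2, and let I be an allowable sub-tuple for M. Then every entry q of the integer list M_I satisfies |q| ≥ 2. -/
/-- The alternating sequence `-2, 2, -2, 2, ..., ±2` of length `n`. -/
def altSeq (n : ℕ) : List ℤ :=
  (List.range n).map (fun j => (-1 : ℤ) ^ (j + 1) * 2)

/-- The `i`-th entry (1-based) of the tuple `M`. -/
def ent (M : List ℕ) (i : ℕ) : ℕ := M.getD (i - 1) 0

/-- `I` is an allowable sub-tuple for the tuple `M` of positive integers:
a strictly increasing tuple of indices in `{1,...,k}` with consecutive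
gaps at least 2, such that for every index `i` with `m_i = 1` at least
one of `i-1, i, i+1` belongs to `I`. -/
def IsAllowable (M : List ℕ) (I : List ℕ) : Prop :=
  I.Chain' (fun a b => a + 2 ≤ b) ∧
  (∀ i ∈ I, 1 ≤ i ∧ i ≤ M.length) ∧
  (∀ i, 1 ≤ i → i ≤ M.length → ent M i = 1 → (i - 1 ∈ I ∨ i ∈ I ∨ i + 1 ∈ I))

/-- The sign `∏_{i' ∈ I, i' < i} (-1)^(m_{i'})` adjusting the entries coming
from position `i` of `M`. -/
def subSign (M : List ℕ) (I : List ℕ) (i : ℕ) : ℤ :=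
  ((I.filter (fun i' => decide (i' < i))).map (fun i' => (-1 : ℤ) ^ ent M i')).prod

/-- Before sign adjustment, the block of entries of `M_I` coming from position `i`
of `M`: either the alternating sequence `-2,2,...,±2` of length `m_i - 1`
(if `i ∈ I`), or the single entry `m_i` increased by 1 for each neighbor of `i`
lying in `I`. -/
def block (M : List ℕ) (I : List ℕ) (i : ℕ) : List ℤ :=
  if i ∈ I then altSeq (ent M i - 1)
  else [(ent M i : ℤ) + (if i - 1 ∈ I then 1 else 0) + (if i + 1 ∈ I then 1 else 0)]

/-- The continued fraction expansion `M_I` associated to an allowable sub-tuple `I`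
of `M`. -/
def MI (M : List ℕ) (I : List ℕ) : List ℤ :=
  ((List.range M.length).map (fun idx =>
    (block M I (idx + 1)).map (fun q => subSign M I (idx + 1) * q))).flatten

/-- `n⁺(N) = #{i : (-1)^(i+1) n_i > 0}` (1-based `i`). -/
def nplus (N : List ℤ) : ℕ :=
  ((List.range N.length).filter
    (fun idx => decide (0 < (-1 : ℤ) ^ idx * N.getD idx 0))).length

/-- `n⁻(N) = #{i : (-1)^(i+1) n_i < 0}` (1-based `i`). -/
def nminus (N : List ℤ) : ℕ :=
  ((List.range N.length).filter
    (fun idx => decide ((-1 : ℤ) ^ idx * N.getD idx 0 < 0))).length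

/-- `Σ_{i ∈ I} (-1)^i m_i`. -/
def sgnSum (M : List ℕ) (I : List ℕ) : ℤ :=
  (I.map (fun i => (-1 : ℤ) ^ i * (ent M i : ℤ))).sum

/-- The dual sub-tuple `(k+1-i_j, ..., k+1-i_1)` of `I = (i_1,...,i_j)`. -/
def dualSub (k : ℕ) (I : List ℕ) : List ℕ :=
  (I.map (fun i => k + 1 - i)).reverse

/-- `(m_1,...,m_k)` is super-increasing if `m_i > Σ_{j<i} m_j` for all `i`. -/
def SuperInc (M : List ℕ) : Prop :=
  ∀ i, 1 ≤ i → i ≤ M.length → (M.take (i - 1)).sum < ent M i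


lemma abs_prod_one (L : List ℤ) (h : ∀ x ∈ L, |x| = 1) : |L.prod| = 1 := by
  induction L with
  | nil => simp
  | cons a t ih =>
    simp only [List.prod_cons, abs_mul]
    rw [h a (by simp), ih (fun x hx => h x (by simp [hx]))]
    ring

lemma abs_subSign (M : List ℕ) (I : List ℕ) (i : ℕ) : |subSign M I i| = 1 := by
  apply abs_prod_one
  intro x hx
  simp only [List.mem_map] at hx
  obtain ⟨i', _, rfl⟩ := hx
  simp [abs_pow]

/-- If `I` is an allowable sub-tuple for a tuple `M` of positive integers with
last entry `≥ 2`, then every entry `q` of `M_I` satisfies `|q| ≥ 2`. -/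
theorem abs_entries_MI_ge_two (M : List ℕ) (hpos : ∀ m ∈ M, 0 < m)
    (hlast : 2 ≤ M.getLastD 0) (I : List ℕ) (hI : IsAllowable M I) :
    ∀ q ∈ MI M I, 2 ≤ |q| := by
  intro q hq
  simp only [MI, List.mem_flatten, List.mem_map, List.mem_range] at hq
  obtain ⟨l, ⟨idx, hidx, rfl⟩, hql⟩ := hq
  simp only [List.mem_map] at hql
  obtain ⟨q', hq', rfl⟩ := hql
  rw [abs_mul, abs_subSign, one_mul]
  by_cases hmem : idx + 1 ∈ I
  · simp only [block, if_pos hmem, altSeq, List.mem_map, List.mem_range] at hq'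
    obtain ⟨j, _, rfl⟩ := hq'
    rw [abs_mul, abs_pow]
    simp
  · simp only [block, if_neg hmem, List.mem_singleton] at hq'
    subst hq'
    have hm : 0 < ent M (idx + 1) := by
      have : M.getD idx 0 ∈ M := by
        rw [List.getD_eq_getElem _ _ hidx]
        exact List.getElem_mem hidx
      simpa [ent] using hpos _ this
    have key : (2 : ℤ) ≤ (ent M (idx+1) : ℤ) + (if idx + 1 - 1 ∈ I then 1 else 0)
        + (if idx + 1 + 1 ∈ I then 1 else 0) := by
      rcases Nat.lt_or_ge (ent M (idx+1)) 2 with h2 | h2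
      · have h1 : ent M (idx+1) = 1 := by omega
        have := hI.2.2 (idx+1) (by omega) (by omega) h1
        rcases this with h | h | h
        · rw [if_pos (show idx + 1 - 1 ∈ I by simpa using h)]
          split <;> push_cast [h1] <;> linarith
        · exact absurd h hmem
        · rw [if_pos (show idx + 1 + 1 ∈ I from h)]
          split <;> push_cast [h1] <;> linarith
      · have : (2:ℤ) ≤ (ent M (idx+1) : ℤ) := by exact_mod_cast h2
        split <;> split <;> linarith
    calc (2:ℤ) ≤ _ := key
      _ ≤ |_| := le_abs_self _
end

section
/- Let M = (m_1,...,m_k) be a tuple of positive integers with m_k ≥ 2, and let N = (n_1,...,n_u) be any list of integers with |n_j| ≥ 2 for every j such that cf(N) = cf(M). Then there exists an allowable sub-tuple I for M with N = M_I. -/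
theorem cf_cons_eq_cf_cons_iff (a b : ℚ) (L L' : List ℚ) :
    cf (a :: L) = cf (b :: L') ↔ a + cf L = b + cf L' := by
  simp only [cf, one_div, inv_inj]

theorem abs_cf_lt_one {L : List ℚ} (hL : ∀ q ∈ L, 2 ≤ |q|) : |cf L| < 1 := by
  induction L with
  | nil => simp [cf]
  | cons a L ih =>
    obtain ⟨ha, hL⟩ := List.forall_mem_cons.mp hL
    have hr := ih hL
    have hden : 1 < |a + cf L| := by linarith [abs_sub_abs_le_abs_add a (cf L)]
    rw [cf, abs_div, abs_one, div_lt_one (by linarith)]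
    exact hden

theorem eq_nil_of_cf_eq_zero {L : List ℚ} (hL : ∀ q ∈ L, 2 ≤ |q|) (h : cf L = 0) : L = [] := by
  cases L with
  | nil => rfl
  | cons a L =>
    obtain ⟨ha, hL⟩ := List.forall_mem_cons.mp hL
    have hr := abs_lt.mp (abs_cf_lt_one hL)
    rw [cf, one_div, inv_eq_zero] at h
    cases abs_cases a <;> linarith

theorem cf_nonneg {L : List ℚ} (hL : ∀ q ∈ L, 0 ≤ q) : 0 ≤ cf L := by
  induction L with
  | nil => simp [cf]
  | cons a L ih =>
    obtain ⟨ha, hL⟩ := List.forall_mem_cons.mp hL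
    have := ih hL
    rw [cf]
    positivity

theorem cf_lt_one {L : List ℚ} (hL : ∀ q ∈ L, 1 ≤ q) (hlast : ∀ x ∈ L.getLast?, 2 ≤ x) :
    cf L < 1 := by
  rcases L with _ | ⟨a, _ | ⟨b, L⟩⟩
  · simp [cf]
  · have : 2 ≤ a := hlast a rfl
    rw [cf, cf, add_zero, div_lt_one (by linarith)]
    linarith
  · obtain ⟨ha, hb, hL⟩ := List.forall_mem_cons.mp hL |>.imp_right List.forall_mem_cons.mp
    have : 0 ≤ cf L := cf_nonneg fun q hq => by linarith [hL q hq]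
    have : 0 < cf (b :: L) := by rw [cf]; positivity
    rw [cf, div_lt_one (by linarith)]
    linarith

theorem cf_one_cons_cons_sub_one (c : ℚ) (L : List ℚ) (h : 0 < c + cf L) :
    cf (1 :: c :: L) - 1 = -cf ((c + 1) :: L) := by
  simp only [cf]
  rw [add_right_comm]
  generalize c + cf L = s at h ⊢
  field_simp
  ring

theorem cf_add_one_cons_sub_one (x : ℚ) (L : List ℚ) (h : 0 < x + cf L) :
    cf ((x + 1) :: L) - 1 = cf [-1 - cf (x :: L)] := by
  simp only [cf, add_zero]
  rw [add_right_comm]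
  generalize x + cf L = s at h ⊢
  have : s + 1 ≠ 0 := by linarith
  have : -s - 1 ≠ 0 := by linarith
  field_simp
  ring

theorem int_eq_or_eq_add_one_of_cast_add_eq {n m : ℤ} {r t : ℚ} (h : n + r = m + t)
    (hr : |r| < 1) (ht₀ : 0 ≤ t) (ht₁ : t < 1) : n = m ∨ n = m + 1 := by
  have hr' := abs_lt.mp hr
  have h₁ : ((n - m : ℤ) : ℚ) < 2 := by push_cast; linarith
  have h₂ : (-1 : ℚ) < ((n - m : ℤ) : ℚ) := by push_cast; linarith
  have : n - m < 2 := by exact_mod_cast h₁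
  have : -1 < n - m := by exact_mod_cast h₂
  omega

theorem int_eq_neg_two_of_cast_add_mem_Ico {p : ℤ} {r : ℚ} (hp : 2 ≤ |p|) (hr : |r| < 1)
    (h : (p : ℚ) + r ∈ Set.Ico (-2) (-1)) : p = -2 := by
  have hr' := abs_lt.mp hr
  have hp₀ : p < 0 := by exact_mod_cast (show (p : ℚ) < 0 by linarith [h.2])
  have : -3 < p := by exact_mod_cast (show (-3 : ℚ) < p by linarith [h.1])
  rw [abs_of_neg hp₀] at hp
  omega

theorem two_le_abs_of_mem_map_intCast {N : List ℤ} (hN : ∀ q ∈ N, 2 ≤ |q|) :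
    ∀ q ∈ (N.map Int.cast : List ℚ), 2 ≤ |q| := by
  simp only [List.mem_map]
  rintro _ ⟨n, hn, rfl⟩
  exact_mod_cast hN n hn

theorem two_le_abs_of_mem_map_neg {N : List ℤ} (hN : ∀ q ∈ N, 2 ≤ |q|) :
    ∀ q ∈ N.map Neg.neg, 2 ≤ |q| := by
  simp only [List.mem_map]
  rintro _ ⟨n, hn, rfl⟩
  rw [abs_neg]
  exact hN n hn

theorem cf_map_neg_intCast (N : List ℤ) :
    cf ((N.map Neg.neg).map Int.cast) = -cf (N.map Int.cast) := by
  rw [← cf_map_neg, List.map_map, List.map_map]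
  congr 1

theorem cf_natCast_nonneg (M : List ℕ) : 0 ≤ cf (M.map Nat.cast) :=
  cf_nonneg fun q hq => by obtain ⟨m, -, rfl⟩ := List.mem_map.mp hq; positivity

theorem exists_cons_of_cf_eq_cf_cons {N : List ℤ} (hN : ∀ q ∈ N, 2 ≤ |q|) {m : ℕ} {L : List ℚ}
    (hm : 1 ≤ m) (ht₀ : 0 ≤ cf L) (ht₁ : cf L < 1) (hcf : cf (N.map Int.cast) = cf (m :: L)) :
    ∃ p N', N = p :: N' ∧ (p = m ∧ cf (N'.map Int.cast) = cf L ∨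
      p = m + 1 ∧ cf (N'.map Int.cast) = cf L - 1) := by
  rcases N with _ | ⟨p, N⟩
  · have : (0 : ℚ) < 1 / (m + cf L) := by positivity
    simp only [List.map_nil, cf] at hcf
    linarith
  refine ⟨p, N, rfl, ?_⟩
  have hr := abs_cf_lt_one (two_le_abs_of_mem_map_intCast (List.forall_mem_cons.mp hN).2)
  rw [List.map_cons, cf_cons_eq_cf_cons_iff] at hcf
  rcases int_eq_or_eq_add_one_of_cast_add_eq (m := m) (by exact_mod_cast hcf) hr ht₀ ht₁
    with rfl | rfl
  · push_cast at hcf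
    exact Or.inl ⟨rfl, by linarith⟩
  · push_cast at hcf
    exact Or.inr ⟨rfl, by linarith⟩

theorem exists_eq_neg_two_cons_of_cf_eq {P : List ℤ} (hP : ∀ q ∈ P, 2 ≤ |q|) {x : ℚ}
    {L : List ℚ} (hx : 1 ≤ x) (ht : 0 ≤ cf L)
    (hcf : cf (P.map Int.cast) = cf ((x + 1) :: L) - 1) :
    ∃ P', P = -2 :: P' ∧ cf ((P'.map Neg.neg).map Int.cast) = cf (x :: L) - 1 := by
  rw [cf_add_one_cons_sub_one _ _ (by positivity)] at hcf
  have hy₀ : 0 < cf (x :: L) := by rw [cf]; positivity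
  have hy₁ : cf (x :: L) ≤ 1 := by rw [cf, div_le_one (by positivity)]; linarith
  rcases P with _ | ⟨p, P⟩
  · have hnil : cf [] = 0 := rfl
    have : cf [-1 - cf (x :: L)] < 0 := div_neg_of_pos_of_neg one_pos (by rw [hnil]; linarith)
    rw [List.map_nil, hnil] at hcf
    linarith
  have hr := abs_cf_lt_one (two_le_abs_of_mem_map_intCast (List.forall_mem_cons.mp hP).2)
  rw [List.map_cons, cf_cons_eq_cf_cons_iff, cf, add_zero] at hcf
  obtain rfl : p = -2 := int_eq_neg_two_of_cast_add_mem_Ico (hP p List.mem_cons_self) hr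
    ⟨by linarith, by linarith⟩
  refine ⟨P, rfl, ?_⟩
  rw [cf_map_neg_intCast]
  push_cast at hcf
  linarith

section getLast

variable {α : Type*} {p : α → Prop} {a b : α} {M : List α}

theorem forall_mem_getLast?_of_cons (h : ∀ x ∈ (a :: M).getLast?, p x) :
    ∀ x ∈ M.getLast?, p x := by
  rcases M with _ | ⟨c, M⟩
  · simp
  · simpa using h

theorem forall_mem_getLast?_cons_of_cons (hb : p b) (h : ∀ x ∈ (a :: M).getLast?, p x) :
    ∀ x ∈ (b :: M).getLast?, p x := by
  rcases M with _ | ⟨c, M⟩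
  · simpa using hb
  · simpa using h

end getLast

theorem ent_cons_one (m : ℕ) (M : List ℕ) : ent (m :: M) 1 = m := rfl

theorem ent_cons_add_two (m : ℕ) (M : List ℕ) (i : ℕ) : ent (m :: M) (i + 2) = ent M (i + 1) :=
  rfl

theorem altSeq_succ (n : ℕ) : altSeq (n + 1) = -2 :: (altSeq n).map Neg.neg := by
  simp only [altSeq, List.range_succ_eq_map, List.map_cons, List.map_map]
  congr 1
  exact List.map_congr_left fun j _ => by simp [pow_succ]

theorem add_one_mem_map_add_one {i : ℕ} {K : List ℕ} : i + 1 ∈ K.map (· + 1) ↔ i ∈ K :=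
  List.mem_map_of_injective (add_left_injective 1)

theorem two_le_of_mem_map_add_one {J : List ℕ} (hJ : ∀ j ∈ J, 1 ≤ j) :
    ∀ j ∈ J.map (· + 1), 2 ≤ j := by
  simp only [List.mem_map]
  rintro _ ⟨j, hj, rfl⟩
  linarith [hJ j hj]

section subSign

variable {M M' I K : List ℕ} {i : ℕ}

theorem subSign_eq_one (h : ∀ j ∈ I, i ≤ j) : subSign M I i = 1 := by
  rw [subSign, List.filter_eq_nil_iff.mpr fun j hj => by simpa using h j hj]
  rfl

theorem subSign_cons_map_add_one (m : ℕ) (hK : ∀ j ∈ K, 1 ≤ j) :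
    subSign (m :: M) (K.map (· + 1)) (i + 1) = subSign M K i := by
  simp only [subSign, List.filter_map, List.map_map]
  congr 1
  rw [List.filter_congr (q := fun j => decide (j < i)) fun j _ => by simp]
  refine List.map_congr_left fun j hj => ?_
  obtain ⟨j, rfl⟩ := Nat.exists_eq_add_of_le' (hK j (List.mem_of_mem_filter hj))
  rfl

theorem subSign_one_cons (hi : 1 < i) :
    subSign M (1 :: K) i = (-1) ^ ent M 1 * subSign M K i := by
  simp [subSign, hi]

theorem subSign_congr (h : ∀ j ∈ K, ent M j = ent M' j) : subSign M K i = subSign M' K i := by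
  simp only [subSign]
  congr 1
  exact List.map_congr_left fun j hj => by rw [h j (List.mem_of_mem_filter hj)]

end subSign

def signedBlock (M I : List ℕ) (i : ℕ) : List ℤ :=
  (block M I i).map (subSign M I i * ·)

theorem MI_eq_flatMap (M I : List ℕ) :
    MI M I = (List.range M.length).flatMap fun j => signedBlock M I (j + 1) :=
  rfl

theorem MI_cons (m : ℕ) (M I : List ℕ) :
    MI (m :: M) I = signedBlock (m :: M) I 1 ++
      (List.range M.length).flatMap fun j => signedBlock (m :: M) I (j + 2) := by
  rw [MI_eq_flatMap, List.length_cons, List.range_succ_eq_map, List.flatMap_cons,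
    List.flatMap_map]

theorem MI_cons_map_add_one (m : ℕ) (M K : List ℕ) (hK : ∀ j ∈ K, 1 ≤ j) :
    MI (m :: M) (K.map (· + 1)) = ((m : ℤ) + if 1 ∈ K then 1 else 0) :: MI M K := by
  have hK0 : 0 ∉ K := fun h => by simpa using hK 0 h
  have hhead :
      signedBlock (m :: M) (K.map (· + 1)) 1 = [(m : ℤ) + if 1 ∈ K then 1 else 0] := by
    rw [signedBlock, block, subSign_eq_one fun j hj => by simp at hj; omega]
    simp [ent_cons_one, add_one_mem_map_add_one.not.mpr hK0]
  rw [MI_cons, MI_eq_flatMap, hhead, List.singleton_append]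
  congr 1
  refine List.flatMap_congr fun j _ => ?_
  rw [signedBlock, signedBlock, subSign_cons_map_add_one m hK]
  simp [block, ent_cons_add_two, add_one_mem_map_add_one]

theorem signedBlock_one_eq_altSeq (a : ℕ) (M K : List ℕ) (hK : ∀ j ∈ K, 2 ≤ j) :
    signedBlock (a :: M) (1 :: K) 1 = altSeq (a - 1) := by
  rw [signedBlock, block, if_pos List.mem_cons_self, ent_cons_one,
    subSign_eq_one fun j hj => by rcases List.mem_cons.mp hj with rfl | hj <;> grind]
  simp

theorem MI_singleton_one_cons (a : ℕ) (K : List ℕ) (hK : ∀ j ∈ K, 2 ≤ j) :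
    MI [a] (1 :: K) = altSeq (a - 1) := by
  rw [MI_cons, signedBlock_one_eq_altSeq a [] K hK]
  simp

theorem MI_cons_cons_one_cons (a c : ℕ) (M J : List ℕ) (hJ : ∀ j ∈ J, 2 ≤ j) :
    MI (a :: c :: M) (1 :: J.map (· + 1)) =
      altSeq (a - 1) ++ (MI ((c + 1) :: M) J).map ((-1) ^ a * ·) := by
  have hJ1 : ∀ j ∈ J, 1 ≤ j := fun j hj => (hJ j hj).trans' one_le_two
  rw [MI_cons, MI_eq_flatMap, signedBlock_one_eq_altSeq a _ _ (two_le_of_mem_map_add_one hJ1),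
    List.map_flatMap]
  congr 1
  refine List.flatMap_congr fun j _ => ?_
  have hsign : subSign (a :: c :: M) (1 :: J.map (· + 1)) (j + 2) =
      (-1) ^ a * subSign ((c + 1) :: M) J (j + 1) := by
    rw [subSign_one_cons (by omega), ent_cons_one, subSign_cons_map_add_one _ hJ1]
    congr 1
    refine subSign_congr fun j hj => ?_
    obtain ⟨j, rfl⟩ := Nat.exists_eq_add_of_le' (hJ j hj)
    rfl
  have hblock :
      block (a :: c :: M) (1 :: J.map (· + 1)) (j + 2) = block ((c + 1) :: M) J (j + 1) := by
    have h0 : 0 ∉ J := fun h => by simpa using hJ 0 h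
    have h1 : 1 ∉ J := fun h => by simpa using hJ 1 h
    rcases j with _ | k
    · simp [block, ent_cons_one, ent_cons_add_two, h0, h1, add_one_mem_map_add_one]
    · simp [block, ent_cons_add_two, add_one_mem_map_add_one]
  rw [signedBlock, signedBlock, hsign, hblock, List.map_map]
  exact List.map_congr_left fun q _ => by simp [mul_assoc]

theorem MI_add_two_cons_one_cons (b : ℕ) (M J : List ℕ) (hJ : ∀ j ∈ J, 2 ≤ j) :
    MI ((b + 2) :: M) (1 :: J.map (· + 1)) =
      -2 :: (MI ((b + 1) :: M) (1 :: J.map (· + 1))).map Neg.neg := by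
  have hJ3 := two_le_of_mem_map_add_one fun j hj => (hJ j hj).trans' one_le_two
  have hseq : altSeq (b + 2 - 1) = -2 :: (altSeq (b + 1 - 1)).map Neg.neg := altSeq_succ b
  rcases M with _ | ⟨c, M⟩
  · rw [MI_singleton_one_cons _ _ hJ3, MI_singleton_one_cons _ _ hJ3, hseq]
  · rw [MI_cons_cons_one_cons _ _ _ _ hJ, MI_cons_cons_one_cons _ _ _ _ hJ, hseq]
    simp [List.map_map, Function.comp_def, pow_succ]

theorem isAllowable_nil : IsAllowable [] [] :=
  ⟨List.isChain_nil, by simp, fun i _ hi _ => by simp at hi; omega⟩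

theorem isAllowable_singleton_one (a : ℕ) : IsAllowable [a] [1] :=
  ⟨List.isChain_singleton 1, by simp, fun i _ hi _ => by simp at hi ⊢; omega⟩

theorem IsAllowable.cons_of_one_mem {x y : ℕ} {M I : List ℕ} (h : IsAllowable (x :: M) I)
    (h1 : 1 ∈ I) : IsAllowable (y :: M) I := by
  obtain ⟨hchain, hbound, hcover⟩ := h
  refine ⟨hchain, by simpa using hbound, fun i hi hle he => ?_⟩
  rcases i with _ | _ | i
  · omega
  · exact Or.inr (Or.inl h1)
  · exact hcover (i + 2) (by omega) (by simpa using hle) he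

theorem IsAllowable.cons_map_add_one {m : ℕ} {M K : List ℕ} (h : IsAllowable M K)
    (hm : m = 1 → 1 ∈ K) : IsAllowable (m :: M) (K.map (· + 1)) := by
  obtain ⟨hchain, hbound, hcover⟩ := h
  refine ⟨List.isChain_map_of_isChain _ (fun _ _ h => by omega) hchain, ?_,
    fun i hi hle he => ?_⟩
  · simp only [List.mem_map, List.length_cons]
    rintro _ ⟨j, hj, rfl⟩
    have := hbound j hj
    omega
  · rcases i with _ | _ | i
    · omega
    · exact Or.inr (Or.inr (add_one_mem_map_add_one.mpr (hm he)))
    · have := hcover (i + 1) (by omega) (by simpa using hle) he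
      rcases i with _ | i
      · simpa [add_one_mem_map_add_one, (hbound 0).mt (by omega)] using this
      · simpa [add_one_mem_map_add_one] using this

theorem IsAllowable.cons_cons_one_cons (a : ℕ) {c : ℕ} {M J : List ℕ}
    (h : IsAllowable ((c + 1) :: M) J) (hJ : ∀ j ∈ J, 2 ≤ j) :
    IsAllowable (a :: c :: M) (1 :: J.map (· + 1)) := by
  obtain ⟨hchain, hbound, hcover⟩ := h
  have hmem : ∀ j ∈ J, j + 1 ∈ 1 :: J.map (· + 1) := fun j hj =>
    List.mem_cons_of_mem _ (add_one_mem_map_add_one.mpr hj)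
  refine ⟨?_, ?_, fun i hi hle he => ?_⟩
  · refine List.isChain_cons.mpr ⟨fun y hy => ?_,
      List.isChain_map_of_isChain _ (fun _ _ h => by omega) hchain⟩
    obtain ⟨j, hj, rfl⟩ := List.mem_map.mp (List.mem_of_mem_head? hy)
    linarith [hJ j hj]
  · simp only [List.mem_cons, List.mem_map, List.length_cons]
    rintro _ (rfl | ⟨j, hj, rfl⟩)
    · omega
    · have := hbound j hj
      simp only [List.length_cons] at this
      omega
  · rcases i with _ | _ | _ | i
    · omega
    · simp
    · simp
    · rcases hcover (i + 2) (by omega) (by simpa using hle) he with h | h | h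
      · exact Or.inl (hmem _ h)
      · exact Or.inr (Or.inl (hmem _ h))
      · exact Or.inr (Or.inr (hmem _ h))

/-- Strengthened by `2 ≤ i` (position 1 is not in `I`) so that a leading `1` can be put in front
of `I`. Unlike `2 ≤ M.getLastD 0`, the condition on `M.getLast?` admits `M = []`, which the
recursion reaches. -/
def ShortExpansionsAreMI (n : ℕ) : Prop :=
  ∀ (N : List ℤ) (M : List ℕ), N.length < n → (∀ q ∈ N, 2 ≤ |q|) → (∀ m ∈ M, 0 < m) →
    (∀ x ∈ M.getLast?, 2 ≤ x) → cf (N.map Int.cast) = cf (M.map Nat.cast) →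
    ∃ I, IsAllowable M I ∧ (∀ i ∈ I, 2 ≤ i) ∧ N = MI M I

theorem ShortExpansionsAreMI.exists_of_cf_eq_cf_sub_one {n : ℕ} (hA : ShortExpansionsAreMI n)
    {a : ℕ} (ha : 1 ≤ a) {M : List ℕ} (hpos : ∀ m ∈ M, 0 < m) (hlast : ∀ x ∈ M.getLast?, 2 ≤ x)
    {P : List ℤ} (hlen : P.length < n) (hP : ∀ q ∈ P, 2 ≤ |q|)
    (hcf : cf (P.map Int.cast) = cf ((a :: M).map Nat.cast) - 1) :
    ∃ J : List ℕ, (∀ j ∈ J, 2 ≤ j) ∧ IsAllowable (a :: M) (1 :: J.map (· + 1)) ∧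
      P = MI (a :: M) (1 :: J.map (· + 1)) := by
  induction a, ha using Nat.le_induction generalizing P with
  | base =>
    rcases M with _ | ⟨c, M⟩
    · obtain rfl : P = [] := by
        simpa using eq_nil_of_cf_eq_zero (two_le_abs_of_mem_map_intCast hP) (by simp [hcf, cf])
      exact ⟨[], by simp, isAllowable_singleton_one 1, (MI_singleton_one_cons 1 [] (by simp)).symm⟩
    · have hc : 1 ≤ c := hpos c List.mem_cons_self
      have hneg : cf ((P.map Neg.neg).map Int.cast) = cf (((c + 1) :: M).map Nat.cast) := by
        have := cf_natCast_nonneg M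
        rw [cf_map_neg_intCast, hcf, List.map_cons, List.map_cons, Nat.cast_one,
          cf_one_cons_cons_sub_one _ _ (by positivity), neg_neg]
        simp
      obtain ⟨J, hJ, hJ2, hJeq⟩ := hA (P.map Neg.neg) ((c + 1) :: M) (by simpa using hlen)
        (two_le_abs_of_mem_map_neg hP)
        (by simpa using fun m hm => hpos m (List.mem_cons_of_mem c hm))
        (forall_mem_getLast?_cons_of_cons (by omega) hlast) hneg
      refine ⟨J, hJ2, hJ.cons_cons_one_cons 1 hJ2, ?_⟩
      rw [MI_cons_cons_one_cons 1 c M J hJ2, ← hJeq]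
      simp [altSeq]
  | succ b hb ih =>
    obtain ⟨b, rfl⟩ := Nat.exists_eq_add_of_le' hb
    rw [List.map_cons, Nat.cast_succ (b + 1)] at hcf
    obtain ⟨P, rfl, hneg⟩ := exists_eq_neg_two_cons_of_cf_eq hP (by simp) (cf_natCast_nonneg M) hcf
    obtain ⟨J, hJ2, hJ, hJeq⟩ := ih (by simp at hlen ⊢; omega)
      (two_le_abs_of_mem_map_neg (List.forall_mem_cons.mp hP).2) hneg
    refine ⟨J, hJ2, hJ.cons_of_one_mem List.mem_cons_self, ?_⟩
    rw [MI_add_two_cons_one_cons b M J hJ2, ← hJeq, List.map_map]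
    simp

theorem ShortExpansionsAreMI.succ {n : ℕ} (hA : ShortExpansionsAreMI n) :
    ShortExpansionsAreMI (n + 1) := by
  intro N M hlen hN hpos hlast hcf
  rcases M with _ | ⟨m, M⟩
  · obtain rfl : N = [] := by
      simpa using eq_nil_of_cf_eq_zero (two_le_abs_of_mem_map_intCast hN)
        (by simpa [cf] using hcf)
    exact ⟨[], isAllowable_nil, by simp, rfl⟩
  have hposM : ∀ x ∈ M, 0 < x := fun x hx => hpos x (List.mem_cons_of_mem m hx)
  have hlastM := forall_mem_getLast?_of_cons hlast
  have ht₁ : cf (M.map Nat.cast) < 1 :=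
    cf_lt_one (by simpa [Nat.one_le_iff_ne_zero, Nat.pos_iff_ne_zero] using hposM)
      (by simpa using hlastM)
  obtain ⟨p, N, rfl, ⟨rfl, hcf'⟩ | ⟨rfl, hcf'⟩⟩ := exists_cons_of_cf_eq_cf_cons hN
    (hpos m List.mem_cons_self) (cf_natCast_nonneg M) ht₁ hcf
  · obtain ⟨K, hK, hK2, hKeq⟩ := hA N M (by simpa using hlen) (List.forall_mem_cons.mp hN).2
      hposM hlastM hcf'
    have hm1 : m ≠ 1 := by rintro rfl; simpa using hN 1 List.mem_cons_self
    refine ⟨K.map (· + 1), hK.cons_map_add_one (absurd · hm1),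
      two_le_of_mem_map_add_one fun j hj => (hK.2.1 j hj).1, ?_⟩
    rw [MI_cons_map_add_one m M K fun j hj => (hK.2.1 j hj).1,
      if_neg fun h => by simpa using hK2 1 h, hKeq, add_zero]
  · rcases M with _ | ⟨a, M⟩
    · have := abs_cf_lt_one (two_le_abs_of_mem_map_intCast (List.forall_mem_cons.mp hN).2)
      rw [hcf', List.map_nil, cf] at this
      norm_num at this
    obtain ⟨J, hJ2, hJ, hJeq⟩ := hA.exists_of_cf_eq_cf_sub_one (hposM a List.mem_cons_self)
      (fun x hx => hposM x (List.mem_cons_of_mem a hx)) (forall_mem_getLast?_of_cons hlastM)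
      (by simpa using hlen) (List.forall_mem_cons.mp hN).2 hcf'
    refine ⟨(1 :: J.map (· + 1)).map (· + 1), hJ.cons_map_add_one fun _ => List.mem_cons_self,
      two_le_of_mem_map_add_one fun j hj => (hJ.2.1 j hj).1, ?_⟩
    rw [MI_cons_map_add_one m _ _ fun j hj => (hJ.2.1 j hj).1, if_pos List.mem_cons_self, hJeq]

theorem shortExpansionsAreMI (n : ℕ) : ShortExpansionsAreMI n := by
  induction n with
  | zero => exact fun N _ hlen => absurd hlen N.length.not_lt_zero
  | succ n ih => exact ih.succ

/-- Any continued fraction expansion `N` of the value of `M` all of whose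
entries have absolute value `≥ 2` arises as `M_I` for some allowable
sub-tuple `I` for `M`. -/
theorem exists_allowable_of_cf_eq (M : List ℕ) (hpos : ∀ m ∈ M, 0 < m)
    (hlast : 2 ≤ M.getLastD 0) (N : List ℤ) (hN : ∀ q ∈ N, 2 ≤ |q|)
    (hcf : cf (N.map (fun n => (n : ℚ))) = cf (M.map (fun m => (m : ℚ)))) :
    ∃ I : List ℕ, IsAllowable M I ∧ N = MI M I := by
  -- `N.map (fun n => (n : ℚ))` elaborates through the list coercion, as
  -- `(N >>= fun a => pure ↑a).map id`.
  have hcf' : cf (N.map Int.cast) = cf (M.map Nat.cast) := by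
    simpa [← List.flatMap_pure_eq_map, Function.comp_def] using hcf
  have hlast' : ∀ x ∈ M.getLast?, 2 ≤ x := fun x hx => by
    rwa [List.getLastD_eq_getLast?, Option.mem_def.mp hx] at hlast
  obtain ⟨I, hI, -, hNI⟩ := shortExpansionsAreMI (N.length + 1) N M N.length.lt_succ_self hN hpos
    hlast' hcf'
  exact ⟨I, hI, hNI⟩
end

section
/- Let M = (m_1,...,m_k) be a tuple of positive integers with m_k ≥ 2, and let I = (i_1,...,i_j) and J = (j_1,...,j_ℓ) be allowable sub-tuples for M. Then n⁺(M_I) − n⁻(M_I) = n⁺(M_J) − n⁻(M_J) if and only if Σ_{s=1}^{j} (−1)^{i_s} m_{i_s} = Σ_{t=1}^{ℓ} (−1)^{j_t} m_{j_t}. -/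
/-! Put `altSignSum N = Σ (-1)^(i+1) sign(n_i)`, so that `n⁺(N) - n⁻(N) = altSignSum N`; over a
concatenation `A ++ B` it adds `altSignSum A` and `(-1)^|A| altSignSum B`. In `M_I` the block
coming from position `i` has length `m_i - 1` and multiplies the running sign `subSign` by
`(-1)^(m_i)` when `i ∈ I`, and has length `1` with no sign change otherwise. Either way the
product of the running sign and the parity of the length read so far flips exactly once per
position, so position `i` contributes `(-1)^(i+1)` times the `altSignSum` of its unsigned block:
`(-1)^(i+1) (1 - m_i)` if `i ∈ I` (the block `-2, 2, -2, …` gives `-(m_i - 1)`) and `(-1)^(i+1)`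
otherwise (the entry is positive). Hence `n⁺(M_I) - n⁻(M_I) = Σ_{i ≤ k} (-1)^(i+1) + sgnSum M I`. -/

def altSignSum : List ℤ → ℤ
  | [] => 0
  | x :: L => x.sign - altSignSum L

@[simp] theorem altSignSum_nil : altSignSum [] = 0 := rfl

@[simp] theorem altSignSum_cons (x : ℤ) (L : List ℤ) :
    altSignSum (x :: L) = x.sign - altSignSum L := rfl

theorem altSignSum_append (A B : List ℤ) :
    altSignSum (A ++ B) = altSignSum A + (-1) ^ A.length * altSignSum B := by
  induction A with
  | nil => simp
  | cons x A ih =>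
    simp only [List.cons_append, altSignSum_cons, ih, List.length_cons, pow_succ]
    ring

theorem altSignSum_map_mul (c : ℤ) (L : List ℤ) :
    altSignSum (L.map (c * ·)) = c.sign * altSignSum L := by
  induction L with
  | nil => simp
  | cons x L ih => simp only [List.map_cons, altSignSum_cons, ih, Int.sign_mul]; ring

theorem altSignSum_altSeq (n : ℕ) : altSignSum (altSeq n) = -n := by
  induction n with
  | zero => simp [altSeq]
  | succ n ih =>
    have hsign : ((-1 : ℤ) ^ (n + 1) * 2).sign = (-1) ^ (n + 1) := by
      rcases neg_one_pow_eq_or ℤ (n + 1) with h | h <;> simp [h]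
    rw [altSeq, List.range_succ, List.map_append, ← altSeq, altSignSum_append, ih]
    simp only [List.map_singleton, altSignSum_cons, altSignSum_nil, hsign, altSeq, List.length_map,
      List.length_range]
    have hodd : (-1 : ℤ) ^ n * (-1) ^ (n + 1) = -1 := by
      rw [← pow_add]; exact Odd.neg_one_pow ⟨n, by ring⟩
    push_cast
    linear_combination hodd

theorem length_filter_range_succ (p : ℕ → Bool) (n : ℕ) :
    ((List.range (n + 1)).filter p).length
      = (if p 0 then 1 else 0) + ((List.range n).filter (fun i => p (i + 1))).length := by
  rw [List.range_succ_eq_map, List.filter_cons, List.filter_map]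
  split <;> simp [Function.comp_def, Nat.add_comm]

theorem nplus_cons (x : ℤ) (L : List ℤ) :
    nplus (x :: L) = (if 0 < x then 1 else 0) + nminus L := by
  simp only [nplus, nminus, List.length_cons, length_filter_range_succ, List.getD_cons_zero,
    List.getD_cons_succ, pow_zero, one_mul, pow_succ, decide_eq_true_eq]
  congr 2
  refine List.filter_congr fun i _ => decide_eq_decide.mpr ?_
  constructor <;> intro h <;> linarith

theorem nminus_cons (x : ℤ) (L : List ℤ) :
    nminus (x :: L) = (if x < 0 then 1 else 0) + nplus L := by
  simp only [nplus, nminus, List.length_cons, length_filter_range_succ, List.getD_cons_zero,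
    List.getD_cons_succ, pow_zero, one_mul, pow_succ, decide_eq_true_eq]
  congr 2
  refine List.filter_congr fun i _ => decide_eq_decide.mpr ?_
  constructor <;> intro h <;> linarith

theorem nplus_sub_nminus (N : List ℤ) : (nplus N : ℤ) - nminus N = altSignSum N := by
  induction N with
  | nil => rfl
  | cons x L ih =>
    rw [nplus_cons, nminus_cons, altSignSum_cons, ← ih]
    rcases lt_trichotomy x 0 with h | rfl | h
    · simp [h, h.not_gt, Int.sign_eq_neg_one_of_neg h]; ring
    · simp
    · simp [h, h.not_gt, Int.sign_eq_one_of_pos h]; ring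

theorem subSign_eq_one_or_neg_one (M I : List ℕ) (i : ℕ) :
    subSign M I i = 1 ∨ subSign M I i = -1 :=
  Int.isUnit_iff.mp <| List.prod_isUnit <| by
    simp only [List.mem_map]
    rintro _ ⟨j, -, rfl⟩
    exact isUnit_neg_one.pow _

theorem subSign_one (M : List ℕ) {I : List ℕ} (hI : ∀ i ∈ I, 1 ≤ i) : subSign M I 1 = 1 := by
  rw [subSign, List.filter_eq_nil_iff.mpr fun i hi => by
    simpa using Nat.one_le_iff_ne_zero.mp (hI i hi)]
  rfl

theorem subSign_succ (M : List ℕ) {I : List ℕ} (hI : I.Nodup) (i : ℕ) :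
    subSign M I (i + 1) = subSign M I i * if i ∈ I then (-1) ^ ent M i else 1 := by
  have hpoint : (if i ∈ I then (-1 : ℤ) ^ ent M i else 1)
      = ∏ j ∈ I.toFinset, if j = i then (-1) ^ ent M j else 1 := by
    simp [Finset.prod_ite_eq']
  simp only [hpoint, subSign, ← List.prod_toFinset _ (hI.filter _), List.toFinset_filter,
    Finset.prod_filter, decide_eq_true_eq]
  rw [← Finset.prod_mul_distrib]
  refine Finset.prod_congr rfl fun j _ => ?_
  rcases lt_trichotomy j i with h | rfl | h
  · simp [h, h.ne, Nat.lt_succ_of_lt h]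
  · simp
  · simp [h.not_gt, h.ne', show ¬ j < i + 1 by omega]

theorem ent_pos {M : List ℕ} (hM : ∀ m ∈ M, 0 < m) {i : ℕ} (h1 : 1 ≤ i) (h2 : i ≤ M.length) :
    0 < ent M i := by
  have hlt : i - 1 < M.length := by omega
  rw [ent, List.getD_eq_getElem?_getD, List.getElem?_eq_getElem hlt]
  exact hM _ (List.getElem_mem hlt)

theorem altSignSum_block (M I : List ℕ) {i : ℕ} (hi : 0 < ent M i) :
    altSignSum (block M I i) = if i ∈ I then 1 - (ent M i : ℤ) else 1 := by
  by_cases h : i ∈ I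
  · rw [block, if_pos h, if_pos h, altSignSum_altSeq]
    omega
  · have : 0 < (ent M i : ℤ) + (if i - 1 ∈ I then 1 else 0) + (if i + 1 ∈ I then 1 else 0) := by
      split_ifs <;> omega
    simp [block, h, Int.sign_eq_one_of_pos this]

theorem subSign_succ_eq_neg_one_pow_length_block (M : List ℕ) {I : List ℕ} {i : ℕ} (hI : I.Nodup)
    (hi : 0 < ent M i) :
    subSign M I (i + 1) = -(-1) ^ (block M I i).length * subSign M I i := by
  rw [subSign_succ M hI, block]
  by_cases h : i ∈ I
  · obtain ⟨m, hm⟩ : ∃ m, ent M i = m + 1 := ⟨_, (Nat.succ_pred_eq_of_pos hi).symm⟩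
    simp only [h, if_true, altSeq, List.length_map, List.length_range, hm, pow_succ,
      Nat.add_sub_cancel]
    ring
  · simp [h]

def MIPrefix (M I : List ℕ) (n : ℕ) : List ℤ :=
  ((List.range n).map fun idx => (block M I (idx + 1)).map (subSign M I (idx + 1) * ·)).flatten

theorem MI_eq_MIPrefix (M I : List ℕ) : MI M I = MIPrefix M I M.length := rfl

theorem MIPrefix_succ (M I : List ℕ) (n : ℕ) :
    MIPrefix M I (n + 1) =
      MIPrefix M I n ++ (block M I (n + 1)).map (subSign M I (n + 1) * ·) := by
  simp [MIPrefix, List.range_succ]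

section Prefix

variable {M I : List ℕ} (hM : ∀ m ∈ M, 0 < m) (hI : I.Nodup) (hI₁ : ∀ i ∈ I, 1 ≤ i)

include hM hI hI₁ in
theorem neg_one_pow_length_MIPrefix {n : ℕ} (hn : n ≤ M.length) :
    (-1) ^ (MIPrefix M I n).length = (-1) ^ n * subSign M I (n + 1) := by
  induction n with
  | zero => simp [MIPrefix, subSign_one M hI₁]
  | succ n ih =>
    rw [MIPrefix_succ, List.length_append, pow_add, ih (by omega),
      subSign_succ_eq_neg_one_pow_length_block M hI (ent_pos hM (by omega) hn), List.length_map]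
    rcases neg_one_pow_eq_or ℤ (block M I (n + 1)).length with h | h <;> rw [h] <;> ring

include hM hI hI₁ in
theorem altSignSum_MIPrefix {n : ℕ} (hn : n ≤ M.length) :
    altSignSum (MIPrefix M I n) =
      ∑ idx ∈ Finset.range n,
        (-1) ^ idx * if idx + 1 ∈ I then 1 - (ent M (idx + 1) : ℤ) else 1 := by
  induction n with
  | zero => rfl
  | succ n ih =>
    have hsign : subSign M I (n + 1) * (subSign M I (n + 1)).sign = 1 := by
      rcases subSign_eq_one_or_neg_one M I (n + 1) with h | h <;> simp [h]
    rw [MIPrefix_succ, altSignSum_append, ih (by omega), Finset.sum_range_succ,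
      neg_one_pow_length_MIPrefix hM hI hI₁ (by omega), altSignSum_map_mul,
      altSignSum_block M I (ent_pos hM (by omega) hn)]
    linear_combination (-1) ^ n * (if n + 1 ∈ I then 1 - (ent M (n + 1) : ℤ) else 1) * hsign

end Prefix

theorem sum_range_add_sgnSum {M I : List ℕ} {n : ℕ} (hI : I.Nodup)
    (hIn : ∀ i ∈ I, 1 ≤ i ∧ i ≤ n) :
    ∑ idx ∈ Finset.range n, (-1) ^ idx * (if idx + 1 ∈ I then 1 - (ent M (idx + 1) : ℤ) else 1) =
      ∑ idx ∈ Finset.range n, (-1) ^ idx + sgnSum M I := by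
  have hsplit : ∀ idx, (-1) ^ idx * (if idx + 1 ∈ I then 1 - (ent M (idx + 1) : ℤ) else 1) =
      (-1) ^ idx + if idx + 1 ∈ I then (-1) ^ (idx + 1) * (ent M (idx + 1) : ℤ) else 0 := by
    intro idx; split_ifs <;> ring
  have hsupp : (Finset.Ico 1 (n + 1)).filter (· ∈ I) = I.toFinset := by
    ext i; simp only [Finset.mem_filter, Finset.mem_Ico, List.mem_toFinset]
    constructor
    · exact fun h => h.2
    · exact fun h => ⟨by have := hIn i h; omega, h⟩
  rw [Finset.sum_congr rfl fun idx _ => hsplit idx, Finset.sum_add_distrib, Finset.range_eq_Ico,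
    Finset.sum_Ico_add' (fun i => if i ∈ I then (-1) ^ i * (ent M i : ℤ) else 0),
    ← Finset.sum_filter, hsupp, List.sum_toFinset _ hI, sgnSum]

theorem nplus_sub_nminus_MI {M I : List ℕ} (hM : ∀ m ∈ M, 0 < m) (hI : I.Nodup)
    (hIM : ∀ i ∈ I, 1 ≤ i ∧ i ≤ M.length) :
    (nplus (MI M I) : ℤ) - nminus (MI M I) =
      ∑ idx ∈ Finset.range M.length, (-1) ^ idx + sgnSum M I := by
  rw [nplus_sub_nminus, MI_eq_MIPrefix,
    altSignSum_MIPrefix hM hI (fun i hi => (hIM i hi).1) le_rfl, sum_range_add_sgnSum hI hIM]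

theorem IsAllowable.nodup {M I : List ℕ} (h : IsAllowable M I) : I.Nodup :=
  (List.isChain_iff_pairwise.mp (h.1.imp fun _ _ h => by omega : I.IsChain (· < ·))).imp
    Nat.ne_of_lt

theorem nplus_sub_nminus_eq_iff_sgnSum_eq_general (M : List ℕ) (hpos : ∀ m ∈ M, 0 < m)
    (I J : List ℕ)
    (hI : IsAllowable M I) (hJ : IsAllowable M J) :
    (nplus (MI M I) : ℤ) - (nminus (MI M I) : ℤ) =
      (nplus (MI M J) : ℤ) - (nminus (MI M J) : ℤ) ↔
    sgnSum M I = sgnSum M J := by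
  rw [nplus_sub_nminus_MI hpos hI.nodup hI.2.1, nplus_sub_nminus_MI hpos hJ.nodup hJ.2.1]
  exact add_right_inj _

/-- Two allowable sub-tuples `I`, `J` of `M` give rise to the same value of
`n⁺ - n⁻` if and only if the corresponding signed sums agree. -/
theorem nplus_sub_nminus_eq_iff_sgnSum_eq (M : List ℕ) (hpos : ∀ m ∈ M, 0 < m)
    (hlast : 2 ≤ M.getLastD 0) (I J : List ℕ)
    (hI : IsAllowable M I) (hJ : IsAllowable M J) :
    (nplus (MI M I) : ℤ) - (nminus (MI M I) : ℤ) =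
      (nplus (MI M J) : ℤ) - (nminus (MI M J) : ℤ) ↔
    sgnSum M I = sgnSum M J :=
  nplus_sub_nminus_eq_iff_sgnSum_eq_general M hpos I J hI hJ
end

section
/- Let M = (m_1,...,m_k) be a super-increasing tuple of positive integers, and let I = (i_1,...,i_r) and J = (j_1,...,j_s) be distinct allowable sub-tuples for M. Then Σ_{ℓ=1}^{r} (−1)^{i_ℓ} m_{i_ℓ} ≠ Σ_{ℓ=1}^{s} (−1)^{j_ℓ} m_{j_ℓ}. -/
/-!
Since each `m_i` exceeds `m_1 + ... + m_(i-1)`, in the difference of the signed sums over two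
distinct index sets the term at the largest index of their symmetric difference outweighs all
the others together, so the difference is nonzero. An allowable sub-tuple is strictly
increasing, hence determined by its set of indices.
-/

open Finset

section AbsDominant

variable {α G : Type*} [LinearOrder α] [AddCommGroup G] [LinearOrder G] [IsOrderedAddMonoid G]
  {w : α → G} {s : Finset α}

theorem Finset.sum_ne_sum_of_abs_dominant {P Q : Finset α} {m : α} (hP : P ⊆ s) (hQ : Q ⊆ s)
    (hPQ : Disjoint P Q) (hm : m ∈ P) (hmax : ∀ i ∈ P ∪ Q, i ≤ m)
    (hdom : ∑ i ∈ s with i < m, |w i| < |w m|) : ∑ i ∈ P, w i ≠ ∑ i ∈ Q, w i := by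
  have hrest : |∑ i ∈ P.erase m, w i - ∑ i ∈ Q, w i| ≤ ∑ i ∈ s with i < m, |w i| :=
    calc _ ≤ |∑ i ∈ P.erase m, w i| + |∑ i ∈ Q, w i| := abs_sub _ _
      _ ≤ ∑ i ∈ P.erase m, |w i| + ∑ i ∈ Q, |w i| :=
        add_le_add (abs_sum_le_sum_abs _ _) (abs_sum_le_sum_abs _ _)
      _ = ∑ i ∈ P.erase m ∪ Q, |w i| :=
        (sum_union (disjoint_of_subset_left (erase_subset m P) hPQ)).symm
      _ ≤ ∑ i ∈ s with i < m, |w i| := by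
        refine sum_le_sum_of_subset_of_nonneg (fun i hi => ?_) (fun _ _ _ => abs_nonneg _)
        have hne : i ≠ m := by
          rcases mem_union.1 hi with hi | hi
          · exact ne_of_mem_erase hi
          · exact fun h => disjoint_left.1 hPQ hm (h ▸ hi)
        have hle := hmax i (union_subset_union (erase_subset m P) subset_rfl hi)
        exact mem_filter.2 ⟨union_subset (fun i hi => hP (mem_of_mem_erase hi)) hQ hi,
          lt_of_le_of_ne hle hne⟩
  intro h
  rw [← add_sum_erase P w hm] at h
  have hwm : w m = -(∑ i ∈ P.erase m, w i - ∑ i ∈ Q, w i) := by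
    rw [← h]; abel
  rw [hwm, abs_neg] at hdom
  exact hdom.not_ge hrest

theorem Finset.eq_of_sum_eq_of_abs_dominant {A B : Finset α} (hA : A ⊆ s) (hB : B ⊆ s)
    (hdom : ∀ m ∈ s, ∑ i ∈ s with i < m, |w i| < |w m|)
    (h : ∑ i ∈ A, w i = ∑ i ∈ B, w i) : A = B := by
  by_contra hne
  have hsd : (symmDiff A B).Nonempty := symmDiff_nonempty.2 hne
  set m := (symmDiff A B).max' hsd
  have hmax : ∀ i ∈ A \ B ∪ B \ A, i ≤ m := fun i hi => le_max' _ i (by rwa [symmDiff_def])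
  have hsdiff : ∑ i ∈ A \ B, w i = ∑ i ∈ B \ A, w i := by
    rw [← sub_eq_zero, sum_sdiff_sub_sum_sdiff, h, sub_self]
  have hm : m ∈ A \ B ∪ B \ A := by
    rw [← sup_eq_union, ← symmDiff_def]; exact max'_mem _ hsd
  rcases mem_union.1 hm with hm | hm
  · exact sum_ne_sum_of_abs_dominant (sdiff_subset.trans hA) (sdiff_subset.trans hB)
      disjoint_sdiff_sdiff hm hmax (hdom m (hA (mem_sdiff.1 hm).1)) hsdiff
  · exact sum_ne_sum_of_abs_dominant (sdiff_subset.trans hB) (sdiff_subset.trans hA)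
      disjoint_sdiff_sdiff hm (by rwa [union_comm]) (hdom m (hB (mem_sdiff.1 hm).1)) hsdiff.symm

end AbsDominant

theorem sum_Ico_ent_eq_sum_take (M : List ℕ) (n : ℕ) :
    ∑ i ∈ Ico 1 (n + 1), ent M i = (M.take n).sum := by
  induction n with
  | zero => simp
  | succ n ih =>
    rw [sum_Ico_succ_top (by omega), ih, ent, Nat.add_sub_cancel]
    rcases lt_or_ge n M.length with h | h
    · rw [List.sum_take_succ _ _ h, List.getD_eq_getElem _ _ h]
    · rw [List.take_of_length_le h, List.take_of_length_le (by omega),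
        List.getD_eq_default _ _ h, add_zero]

theorem SuperInc.abs_dominant {M : List ℕ} (hM : SuperInc M) :
    ∀ m ∈ Icc 1 M.length, ∑ i ∈ Icc 1 M.length with i < m, |(-1 : ℤ) ^ i * ent M i| <
      |(-1 : ℤ) ^ m * ent M m| := by
  intro m hm
  obtain ⟨h1, hlen⟩ := mem_Icc.1 hm
  have hIco : {i ∈ Icc 1 M.length | i < m} = Ico 1 (m - 1 + 1) := by
    ext i; simp only [mem_filter, mem_Icc, mem_Ico]; omega
  simp only [abs_mul, abs_pow, abs_neg, abs_one, one_pow, one_mul, Nat.abs_cast]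
  rw [hIco]
  exact_mod_cast sum_Ico_ent_eq_sum_take M (m - 1) ▸ hM m h1 hlen

theorem IsAllowable.pairwise_lt {M I : List ℕ} (hI : IsAllowable M I) : I.Pairwise (· < ·) :=
  (hI.1.imp fun h => by omega).pairwise

theorem IsAllowable.toFinset_subset {M I : List ℕ} (hI : IsAllowable M I) :
    I.toFinset ⊆ Icc 1 M.length :=
  fun i hi => mem_Icc.2 (hI.2.1 i (List.mem_toFinset.1 hi))

theorem sgnSum_eq_sum_toFinset (M : List ℕ) {I : List ℕ} (hI : I.Nodup) :
    sgnSum M I = ∑ i ∈ I.toFinset, (-1 : ℤ) ^ i * ent M i :=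
  (List.sum_toFinset _ hI).symm

theorem sgnSum_injective_of_superInc_general (M : List ℕ)
    (hsuper : SuperInc M) (I J : List ℕ)
    (hI : IsAllowable M I) (hJ : IsAllowable M J) (hne : I ≠ J) :
    sgnSum M I ≠ sgnSum M J := by
  intro heq
  have hIs := hI.pairwise_lt
  have hJs := hJ.pairwise_lt
  rw [sgnSum_eq_sum_toFinset M hIs.nodup, sgnSum_eq_sum_toFinset M hJs.nodup] at heq
  have hset : I.toFinset = J.toFinset :=
    eq_of_sum_eq_of_abs_dominant hI.toFinset_subset hJ.toFinset_subset hsuper.abs_dominant heq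
  exact hne <|
    (List.perm_of_nodup_nodup_toFinset_eq hIs.nodup hJs.nodup hset).eq_of_pairwise' hIs hJs

/-- For a super-increasing tuple `M` of positive integers, distinct allowable
sub-tuples have distinct signed sums `Σ (-1)^(i_ℓ) m_(i_ℓ)`. -/
theorem sgnSum_injective_of_superInc (M : List ℕ) (hpos : ∀ m ∈ M, 0 < m)
    (hsuper : SuperInc M) (I J : List ℕ)
    (hI : IsAllowable M I) (hJ : IsAllowable M J) (hne : I ≠ J) :
    sgnSum M I ≠ sgnSum M J :=
  sgnSum_injective_of_superInc_general M hsuper I J hI hJ hne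
end

section
/- Let M = (m_1,...,m_k) be a tuple of positive integers such that every m_i is odd and k is divisible by 3. Then, writing the continued fraction value cf(M) in lowest terms as β/α with α > 0, the denominator α is odd (so that the corresponding 2-bridge link K(α,β) is a knot). -/
/-!
If `cf L = p / q` in lowest terms, then `cf (m :: L) = q / (m q + p)`, again in lowest terms.
For odd `m` this acts on parities as `(p, q) ↦ (q, p + q)`, which has period 3, and the empty
list starts the cycle at `(0, 1)`; so after a multiple of three steps the denominator is odd.
-/

def cfNumDen : List ℕ → ℕ × ℕ
  | [] => (0, 1)
  | m :: L => ((cfNumDen L).2, m * (cfNumDen L).2 + (cfNumDen L).1)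

theorem cfNumDen_coprime (M : List ℕ) : Nat.Coprime (cfNumDen M).1 (cfNumDen M).2 := by
  induction M with
  | nil => simp [cfNumDen]
  | cons m L ih =>
    simpa [cfNumDen, add_comm] using (Nat.coprime_add_mul_right_right _ _ m).mpr ih.symm

theorem cfNumDen_snd_pos {M : List ℕ} (hM : ∀ m ∈ M, 0 < m) : 0 < (cfNumDen M).2 := by
  induction M with
  | nil => simp [cfNumDen]
  | cons m L ih =>
    have hL := ih fun x hx => hM x (List.mem_cons_of_mem m hx)
    have hm := hM m List.mem_cons_self
    simp only [cfNumDen]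
    positivity

theorem cf_map_natCast {M : List ℕ} (hM : ∀ m ∈ M, 0 < m) :
    cf (M.map ((↑) : ℕ → ℚ)) = (cfNumDen M).1 / (cfNumDen M).2 := by
  induction M with
  | nil => simp [cf, cfNumDen]
  | cons m L ih =>
    have hL : ∀ x ∈ L, 0 < x := fun x hx => hM x (List.mem_cons_of_mem m hx)
    have hq : (0 : ℚ) < (cfNumDen L).2 := by exact_mod_cast cfNumDen_snd_pos hL
    simp only [List.map_cons, cf, ih hL, cfNumDen]
    field_simp
    push_cast
    ring

theorem den_cf_map_natCast {M : List ℕ} (hM : ∀ m ∈ M, 0 < m) :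
    (cf (M.map ((↑) : ℕ → ℚ))).den = (cfNumDen M).2 := by
  rw [cf_map_natCast hM]
  have h := Rat.den_div_eq_of_coprime (a := (cfNumDen M).1) (b := (cfNumDen M).2)
    (by exact_mod_cast cfNumDen_snd_pos hM) (by exact_mod_cast cfNumDen_coprime M)
  push_cast at h
  exact_mod_cast h

theorem cfNumDen_three_cons_parity {a b c : ℕ} {L : List ℕ} (ha : Odd a) (hb : Odd b)
    (hc : Odd c) (hL : Even (cfNumDen L).1 ∧ Odd (cfNumDen L).2) :
    Even (cfNumDen (a :: b :: c :: L)).1 ∧ Odd (cfNumDen (a :: b :: c :: L)).2 := by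
  simp only [← Nat.not_even_iff_odd] at ha hb hc hL ⊢
  simp only [cfNumDen, Nat.even_add, Nat.even_mul]
  tauto

theorem cfNumDen_parity_of_three_dvd_length {M : List ℕ} (hodd : ∀ m ∈ M, Odd m)
    (hlen : 3 ∣ M.length) : Even (cfNumDen M).1 ∧ Odd (cfNumDen M).2 := by
  obtain ⟨n, hn⟩ := hlen
  induction n generalizing M with
  | zero => simp_all [cfNumDen]
  | succ n ih =>
    match M, hn with
    | a :: b :: c :: L, hn =>
      simp only [List.mem_cons, forall_eq_or_imp] at hodd
      exact cfNumDen_three_cons_parity hodd.1 hodd.2.1 hodd.2.2.1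
        (ih hodd.2.2.2 (by simpa [mul_add] using hn))

theorem den_odd_of_all_odd_of_three_dvd_length_general (M : List ℕ)
    (hodd : ∀ m ∈ M, Odd m) (hlen : 3 ∣ M.length) :
    Odd (cf (M.map (fun m => (m : ℚ)))).den := by
  -- The ascription lifts `M` itself into `List ℚ` through the list monad.
  have hcast : (M.map fun m => (m : ℚ)) = M.map ((↑) : ℕ → ℚ) := by
    simp [← List.map_eq_flatMap]
  rw [hcast, den_cf_map_natCast fun m hm => (hodd m hm).pos]
  exact (cfNumDen_parity_of_three_dvd_length hodd hlen).2

/-- If `M` is a tuple of positive odd integers of length divisible by 3, then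
the denominator `α` of the continued fraction value of `M` in lowest terms is
odd (so the associated 2-bridge link `K(α,β)` is a knot). -/
theorem den_odd_of_all_odd_of_three_dvd_length (M : List ℕ)
    (hpos : ∀ m ∈ M, 0 < m) (hodd : ∀ m ∈ M, Odd m) (hlen : 3 ∣ M.length) :
    Odd (cf (M.map (fun m => (m : ℚ)))).den :=
  den_odd_of_all_odd_of_three_dvd_length_general M hodd hlen
end
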